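/- For all n ≥ 0, h₃(2n) = h₃(n) and h₃(4n+1) = 3·h₃(n), where h₃(n) is the number of odd coefficients of (1+x+x^3)^n. -/

import Mathlib

open Polynomial

/-- The number of odd coefficients of a polynomial over ℤ. -/
noncomputable def oddCoeffCount (p : Polynomial ℤ) : ℕ :=
  (p.support.filter fun j => Odd (p.coeff j)).card

noncomputable def h3 (n : ℕ) : ℕ := oddCoeffCount ((1 + X + X ^ 3) ^ n)

/-! Reducing modulo 2, `h3 n` is the number of nonzero coefficients of `g ^ n` for
`g = 1 + X + X ^ 3 ∈ 𝔽₂[X]`. Frobenius gives `g ^ (2n) = (g ^ n)(X ^ 2)` and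
`g ^ (4n+1) = (g ^ n)(X ^ 4) · g`. Since `deg g < 4`, in a product `F(X ^ k) · G` with
`deg G < k` the coefficient at `kq + r` (`r < k`) is `F_q · G_r`, so no cancellation occurs and
the support has exactly `#supp F · #supp G` elements. -/

open Finset

namespace Polynomial

variable {R : Type*} [CommSemiring R]

theorem coeff_expand_mul_of_natDegree_lt {k : ℕ} {G : R[X]} (hG : G.natDegree < k)
    (F : R[X]) (q : ℕ) {r : ℕ} (hr : r < k) :
    (expand R k F * G).coeff (k * q + r) = F.coeff q * G.coeff r := by
  have hk : 0 < k := by omega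
  rw [coeff_mul, sum_eq_single_of_mem (k * q, r) (HasAntidiagonal.mem_antidiagonal.mpr rfl),
    coeff_expand_mul' hk]
  rintro ⟨a, b⟩ hab hne
  rw [HasAntidiagonal.mem_antidiagonal] at hab
  by_cases hGb : G.coeff b = 0
  · rw [hGb, mul_zero]
  have hb : b < k := (le_natDegree_of_ne_zero hGb).trans_lt hG
  rw [coeff_expand hk, if_neg, zero_mul]
  rintro ⟨c, rfl⟩
  have hcq : c = q := by
    have := congrArg (· / k) hab
    simp only [Nat.mul_add_div hk, Nat.div_eq_of_lt hb, Nat.div_eq_of_lt hr] at this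
    omega
  subst hcq
  exact hne (Prod.ext rfl (by simpa using hab))

theorem card_support_expand_mul [NoZeroDivisors R] {k : ℕ} {G : R[X]} (hG : G.natDegree < k)
    (F : R[X]) : #(expand R k F * G).support = #F.support * #G.support := by
  have hk : 0 < k := by omega
  have hdigits {n : ℕ} : (expand R k F * G).coeff n = F.coeff (n / k) * G.coeff (n % k) := by
    conv_lhs => rw [← Nat.div_add_mod n k]
    exact coeff_expand_mul_of_natDegree_lt hG F _ (Nat.mod_lt n hk)
  rw [← card_product]
  refine card_nbij' (fun n => (n / k, n % k)) (fun p => k * p.1 + p.2) ?_ ?_ ?_ ?_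
  · intro n hn
    simpa [hdigits, not_or] using hn
  · rintro ⟨q, r⟩ hqr
    simp only [coe_product, Set.mem_prod, mem_coe, mem_support_iff] at hqr ⊢
    have hr : r < k := (le_natDegree_of_ne_zero hqr.2).trans_lt hG
    rw [coeff_expand_mul_of_natDegree_lt hG F q hr]
    exact mul_ne_zero hqr.1 hqr.2
  · intro n _
    exact Nat.div_add_mod n k
  · rintro ⟨q, r⟩ hqr
    simp only [coe_product, Set.mem_prod, mem_coe, mem_support_iff] at hqr
    have hr : r < k := (le_natDegree_of_ne_zero hqr.2).trans_lt hG
    simp [Nat.mul_add_div hk, Nat.div_eq_of_lt hr, Nat.mod_eq_of_lt hr]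

theorem card_support_expand [NoZeroDivisors R] [Nontrivial R] {k : ℕ} (hk : 0 < k) (F : R[X]) :
    #(expand R k F).support = #F.support := by
  rw [← mul_one (expand R k F), card_support_expand_mul (by rwa [natDegree_one]),
    ← C_1, support_C one_ne_zero, card_singleton, mul_one]

end Polynomial

theorem oddCoeffCount_eq_card_support_map (p : ℤ[X]) :
    oddCoeffCount p = #(p.map (Int.castRingHom (ZMod 2))).support := by
  rw [oddCoeffCount]
  congr 1
  ext j
  simp only [mem_filter, mem_support_iff, coeff_map, eq_intCast, ne_eq,
    ZMod.intCast_eq_zero_iff_even, Int.not_even_iff_odd, and_iff_right_iff_imp]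
  intro hodd hzero
  exact Int.not_odd_zero (hzero ▸ hodd)

theorem ZMod.expand_prime_pow {p : ℕ} [Fact p.Prime] (f : (ZMod p)[X]) (m : ℕ) :
    expand (ZMod p) (p ^ m) f = f ^ p ^ m := by
  induction m with
  | zero => simp
  | succ m ih => rw [pow_succ', expand_mul, ih, ZMod.expand_card, ← pow_mul, mul_comm]

theorem h3_eq_card_support (n : ℕ) : h3 n = #((1 + X + X ^ 3 : (ZMod 2)[X]) ^ n).support := by
  simp [h3, oddCoeffCount_eq_card_support_map]

theorem stmt_8 : ∀ n : ℕ, h3 (2 * n) = h3 n ∧ h3 (4 * n + 1) = 3 * h3 n := by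
  intro n
  have hdeg : (1 + X + X ^ 3 : (ZMod 2)[X]).natDegree < 2 ^ 2 :=
    (natDegree_le_iff_degree_le.mpr (by compute_degree!)).trans_lt (by norm_num : 3 < 2 ^ 2)
  have hcard : #(1 + X + X ^ 3 : (ZMod 2)[X]).support = 3 := by
    simpa using card_support_trinomial (R := ZMod 2) (k := 0) (m := 1) (n := 3) (by omega)
      (by omega) one_ne_zero one_ne_zero one_ne_zero
  simp only [h3_eq_card_support]
  constructor
  · rw [pow_mul', ← ZMod.expand_card, card_support_expand two_pos]
  · rw [pow_succ, pow_mul', show 4 = 2 ^ 2 from rfl, ← ZMod.expand_prime_pow,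
      card_support_expand_mul hdeg, hcard, mul_comm]
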